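/- Let α be an irrational real number and let p/q be a fraction in lowest terms with q ≥ 1 and α > p/q (respectively α < p/q). Let p/q = [a₀; a₁, …, aₙ] be the continued fraction expansion of p/q chosen (among its two expansions) with n even (respectively n odd), and let q′ be the denominator of its second-to-last convergent [a₀; a₁, …, aₙ₋₁] in lowest terms. Then p/q is a convergent of the continued fraction expansion of α if and only if |α − p/q| < 1/(q(q + q′)). -/

import Mathlib

open Filter Topology

/-- Value of the finite continued fraction `[a₀; a₁, …, aₙ]`, where the partial
quotients `a₁, …, aₙ` are given as the list `l`. -/
def cfq : ℤ → List ℕ → ℚ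
  | a, [] => (a : ℚ)
  | a, b :: l => (a : ℚ) + (cfq (b : ℤ) l)⁻¹

/-- Continuants: `cfPair a₀ [a₁,…,aₙ] = ((pₙ, pₙ₋₁), (qₙ, qₙ₋₁))`, the numerators and
denominators (in lowest terms) of the last two convergents of `[a₀; a₁, …, aₙ]`,
with the usual conventions `p₋₁ = 1`, `q₋₁ = 0`. -/
def cfPair (a₀ : ℤ) (l : List ℕ) : (ℤ × ℤ) × (ℤ × ℤ) :=
  l.foldl (fun pq b => (((b : ℤ) * pq.1.1 + pq.1.2, pq.1.1), ((b : ℤ) * pq.2.1 + pq.2.2, pq.2.1)))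
    ((a₀, 1), (1, 0))

/-- The list of the first `n` terms of the sequence `a`. -/
def pref (a : ℕ → ℕ) (n : ℕ) : List ℕ := List.ofFn fun i : Fin n => a i

/-- `x` is a convergent of a continued fraction expansion of `α` (if `α` is rational this
means: a convergent of at least one of its two finite expansions; if `α` is irrational,
of its unique infinite expansion, an expansion of `α` being a continued fraction with
positive integer partial quotients whose convergents tend to `α`). -/
def IsConvergentOf (x : ℚ) (α : ℝ) : Prop :=
  (∃ (a₀ : ℤ) (l : List ℕ), (∀ b ∈ l, 0 < b) ∧ ((cfq a₀ l : ℚ) : ℝ) = α ∧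
    ∃ k, cfq a₀ (l.take k) = x) ∨
  (∃ (a₀ : ℤ) (a : ℕ → ℕ), (∀ i, 0 < a i) ∧
    Tendsto (fun n => ((cfq a₀ (pref a n) : ℚ) : ℝ)) atTop (nhds α) ∧
    ∃ n, cfq a₀ (pref a n) = x)

/-- `x'` and `x` are two consecutive convergents (in this order) of a continued fraction
expansion of `α`. -/
def ConsecConvergentsOf (x' x : ℚ) (α : ℝ) : Prop :=
  (∃ (a₀ : ℤ) (l : List ℕ), (∀ b ∈ l, 0 < b) ∧ ((cfq a₀ l : ℚ) : ℝ) = α ∧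
    ∃ k, k + 1 ≤ l.length ∧ cfq a₀ (l.take k) = x' ∧ cfq a₀ (l.take (k + 1)) = x) ∨
  (∃ (a₀ : ℤ) (a : ℕ → ℕ), (∀ i, 0 < a i) ∧
    Tendsto (fun n => ((cfq a₀ (pref a n) : ℚ) : ℝ)) atTop (nhds α) ∧
    ∃ k, cfq a₀ (pref a k) = x' ∧ cfq a₀ (pref a (k + 1)) = x)

/-- `α` admits a (finite or infinite) continued fraction expansion `[0; l, …]`
beginning with the partial quotients in `l`. -/
def cfBegins (l : List ℕ) (α : ℝ) : Prop :=
  (∃ m : List ℕ, (∀ b ∈ m, 0 < b) ∧ ((cfq 0 (l ++ m) : ℚ) : ℝ) = α) ∨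
  (∃ a : ℕ → ℕ, (∀ i, 0 < a i) ∧
    Tendsto (fun n => ((cfq 0 (l ++ pref a n) : ℚ) : ℝ)) atTop (nhds α))

/-- The cylinder `E(a₁,…,aₙ)`: all `α ∈ [0,1]` admitting a (finite or infinite)
continued fraction expansion beginning with the partial quotients `a₁, …, aₙ`. -/
def cfCylinder (l : List ℕ) : Set ℝ := {α : ℝ | α ∈ Set.Icc (0 : ℝ) 1 ∧ cfBegins l α}

/-- The Farey sequence of order `q`: all fractions in `[0,1]` whose denominator in
lowest terms is at most `q`. -/
def FareySet (q : ℕ) : Set ℚ := {x : ℚ | 0 ≤ x ∧ x ≤ 1 ∧ x.den ≤ q}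

/-- `rlo` and `rhi` are the two neighbors of `x` in the Farey sequence of order `q`. -/
def FareyNeighbors (q : ℕ) (x rlo rhi : ℚ) : Prop :=
  rlo ∈ FareySet q ∧ rhi ∈ FareySet q ∧ rlo < x ∧ x < rhi ∧
    (∀ y ∈ FareySet q, y < x → y ≤ rlo) ∧ (∀ y ∈ FareySet q, x < y → rhi ≤ y)

lemma cfPair_nil (a : ℤ) : cfPair a [] = ((a, 1), (1, 0)) := rfl

lemma cfPair_append (a : ℤ) (l : List ℕ) (b : ℕ) :
    cfPair a (l ++ [b]) =
      (((b : ℤ) * (cfPair a l).1.1 + (cfPair a l).1.2, (cfPair a l).1.1),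
       ((b : ℤ) * (cfPair a l).2.1 + (cfPair a l).2.2, (cfPair a l).2.1)) := by
  simp [cfPair, List.foldl_append]

lemma pref_zero (a : ℕ → ℕ) : pref a 0 = [] := rfl

lemma pref_succ (a : ℕ → ℕ) (n : ℕ) : pref a (n + 1) = pref a n ++ [a n] := by
  rw [pref, List.ofFn_succ', List.concat_eq_append]
  simp [pref]

lemma pref_cons (a : ℕ → ℕ) (n : ℕ) :
    pref a (n + 1) = a 0 :: pref (fun i => a (i + 1)) n := by
  simp [pref, List.ofFn_succ]

lemma mem_pref {a : ℕ → ℕ} {n : ℕ} {b : ℕ} (h : b ∈ pref a n) : ∃ i, a i = b := by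
  simp only [pref, List.mem_ofFn] at h
  obtain ⟨i, hi⟩ := h
  exact ⟨i, hi⟩

lemma length_pref (a : ℕ → ℕ) (n : ℕ) : (pref a n).length = n := by simp [pref]

lemma cfPair_q_nonneg (a : ℤ) (l : List ℕ) (hl : ∀ b ∈ l, 0 < b) :
    0 ≤ (cfPair a l).2.2 ∧ (cfPair a l).2.2 ≤ (cfPair a l).2.1 ∧ 1 ≤ (cfPair a l).2.1 := by
  induction l using List.reverseRecOn with
  | nil => simp [cfPair_nil]
  | append_singleton l b ih =>
    have hb : 0 < b := hl b (by simp)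
    have ih' := ih (fun c hc => hl c (by simp [hc]))
    rw [cfPair_append]; dsimp only
    obtain ⟨h1, h2, h3⟩ := ih'
    refine ⟨by linarith, ?_, ?_⟩
    swap
    · have hb' : (1 : ℤ) ≤ (b : ℤ) := by exact_mod_cast hb
      nlinarith
    have hb' : (1 : ℤ) ≤ (b : ℤ) := by exact_mod_cast hb
    nlinarith

lemma cfPair_p_pos (b : ℕ) (hb : 0 < b) (l : List ℕ) (hl : ∀ c ∈ l, 0 < c) :
    0 ≤ (cfPair (b : ℤ) l).1.2 ∧ 1 ≤ (cfPair (b : ℤ) l).1.1 := by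
  induction l using List.reverseRecOn with
  | nil =>
    rw [cfPair_nil]
    refine ⟨zero_le_one, ?_⟩
    show (1 : ℤ) ≤ (b : ℤ)
    exact_mod_cast hb
  | append_singleton l c ih =>
    have hc : 0 < c := hl c (by simp)
    have ih' := ih (fun d hd => hl d (by simp [hd]))
    rw [cfPair_append]; dsimp only
    obtain ⟨h1, h2⟩ := ih'
    have hc' : (1 : ℤ) ≤ (c : ℤ) := by exact_mod_cast hc
    constructor
    · linarith
    · nlinarith

lemma cfPair_q'_pos (a : ℤ) (l : List ℕ) (hne : l ≠ []) (hl : ∀ b ∈ l, 0 < b) :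
    1 ≤ (cfPair a l).2.2 := by
  induction l using List.reverseRecOn with
  | nil => exact absurd rfl hne
  | append_singleton l b ih =>
    rw [cfPair_append]
    exact (cfPair_q_nonneg a l (fun c hc => hl c (by simp [hc]))).2.2

lemma cfPair_q'_eq_q (a : ℤ) (l : List ℕ) (hl : ∀ b ∈ l, 0 < b)
    (h : (cfPair a l).2.2 = (cfPair a l).2.1) : l.length = 1 := by
  induction l using List.reverseRecOn with
  | nil => simp [cfPair_nil] at h
  | append_singleton l b ih =>
    rw [cfPair_append] at h; dsimp only at h
    -- h : Q₁ = b * Q₁ + Q₁'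
    have hb : 0 < b := hl b (by simp)
    have hb' : (1 : ℤ) ≤ (b : ℤ) := by exact_mod_cast hb
    obtain ⟨h1, h2, h3⟩ := cfPair_q_nonneg a l (fun c hc => hl c (by simp [hc]))
    have hq' : (cfPair a l).2.2 = 0 := by nlinarith
    have : l = [] := by
      by_contra hne
      have := cfPair_q'_pos a l hne (fun c hc => hl c (by simp [hc]))
      omega
    simp [this]

lemma cfPair_det (a : ℤ) (l : List ℕ) :
    (cfPair a l).1.1 * (cfPair a l).2.2 - (cfPair a l).1.2 * (cfPair a l).2.1
      = (-1) ^ (l.length + 1) := by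
  induction l using List.reverseRecOn with
  | nil => simp [cfPair_nil]
  | append_singleton l b ih =>
    rw [cfPair_append]; dsimp only
    simp only [List.length_append, List.length_singleton, pow_succ]
    rw [pow_succ] at ih
    linear_combination (-1 : ℤ) * ih

/-- Real value of `[a; l, x]` where `x` is the final full quotient. -/
noncomputable def hv : ℤ → List ℕ → ℝ → ℝ
  | a, [], x => (a : ℝ) + x⁻¹
  | a, b :: l, x => (a : ℝ) + (hv (b : ℤ) l x)⁻¹

lemma hv_nil (a : ℤ) (x : ℝ) : hv a [] x = (a : ℝ) + x⁻¹ := rfl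
lemma hv_cons (a : ℤ) (b : ℕ) (l : List ℕ) (x : ℝ) :
    hv a (b :: l) x = (a : ℝ) + (hv (b : ℤ) l x)⁻¹ := rfl

lemma hv_append (l : List ℕ) : ∀ (a : ℤ) (b : ℕ) (x : ℝ),
    hv a (l ++ [b]) x = hv a l ((b : ℝ) + x⁻¹) := by
  induction l with
  | nil => intro a b x; simp [hv_nil, hv_cons]
  | cons c l ih => intro a b x; rw [List.cons_append, hv_cons, ih, hv_cons]

lemma cast_cfq_split (l : List ℕ) : ∀ (a : ℤ) (b : ℕ) (m : List ℕ),
    ((cfq a (l ++ b :: m) : ℚ) : ℝ) = hv a l ((cfq (b : ℤ) m : ℚ) : ℝ) := by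
  induction l with
  | nil =>
    intro a b m
    show ((cfq a (b :: m) : ℚ) : ℝ) = _
    rw [cfq, hv_nil]
    push_cast
    ring
  | cons c l ih =>
    intro a b m
    rw [List.cons_append, cfq, hv_cons, ← ih]
    push_cast
    ring

lemma cast_cfq_append (l : List ℕ) (a : ℤ) (b : ℕ) :
    ((cfq a (l ++ [b]) : ℚ) : ℝ) = hv a l (b : ℝ) := by
  have := cast_cfq_split l a b []
  rw [this, cfq]
  norm_num

lemma cfPair_cons (a : ℤ) (b : ℕ) (l : List ℕ) :
    cfPair a (b :: l) =
      ((a * (cfPair (b : ℤ) l).1.1 + (cfPair (b : ℤ) l).2.1,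
        a * (cfPair (b : ℤ) l).1.2 + (cfPair (b : ℤ) l).2.2),
       (cfPair (b : ℤ) l).1.1, (cfPair (b : ℤ) l).1.2) := by
  induction l using List.reverseRecOn with
  | nil => simp [cfPair_nil, cfPair, List.foldl]; ring
  | append_singleton l c ih =>
    rw [← List.cons_append, cfPair_append, cfPair_append, ih]
    dsimp only
    refine Prod.ext (Prod.ext ?_ ?_) (Prod.ext ?_ ?_) <;> dsimp only <;> ring

lemma hv_formula : ∀ (l : List ℕ) (a : ℤ) (x : ℝ), (∀ b ∈ l, 0 < b) → 0 < x →
    hv a l x = (((cfPair a l).1.1 : ℝ) * x + ((cfPair a l).1.2 : ℝ)) /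
      (((cfPair a l).2.1 : ℝ) * x + ((cfPair a l).2.2 : ℝ)) := by
  intro l
  induction l with
  | nil =>
    intro a x _ hx
    rw [hv_nil, cfPair_nil]
    push_cast
    field_simp
    ring
  | cons b l ih =>
    intro a x hl hx
    have hb : 0 < b := hl b (by simp)
    have hpos := cfPair_p_pos b hb l (fun c hc => hl c (by simp [hc]))
    have hq := cfPair_q_nonneg (b : ℤ) l (fun c hc => hl c (by simp [hc]))
    rw [hv_cons, ih (b : ℤ) x (fun c hc => hl c (by simp [hc])) hx, cfPair_cons]
    dsimp only
    have hP : (0 : ℝ) < ((cfPair (b : ℤ) l).1.1 : ℝ) * x + ((cfPair (b : ℤ) l).1.2 : ℝ) := by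
      have h1 : (1 : ℝ) ≤ ((cfPair (b : ℤ) l).1.1 : ℝ) := by exact_mod_cast hpos.2
      have h2 : (0 : ℝ) ≤ ((cfPair (b : ℤ) l).1.2 : ℝ) := by exact_mod_cast hpos.1
      nlinarith
    have hQ : (0 : ℝ) < ((cfPair (b : ℤ) l).2.1 : ℝ) * x + ((cfPair (b : ℤ) l).2.2 : ℝ) := by
      have h1 : (1 : ℝ) ≤ ((cfPair (b : ℤ) l).2.1 : ℝ) := by exact_mod_cast hq.2.2
      have h2 : (0 : ℝ) ≤ ((cfPair (b : ℤ) l).2.2 : ℝ) := by exact_mod_cast hq.1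
      nlinarith
    push_cast
    field_simp
    ring

lemma cast_cfq_eq (a : ℤ) (l : List ℕ) (hl : ∀ b ∈ l, 0 < b) :
    ((cfq a l : ℚ) : ℝ) = ((cfPair a l).1.1 : ℝ) / ((cfPair a l).2.1 : ℝ) := by
  induction l using List.reverseRecOn with
  | nil => rw [cfPair_nil]; norm_num [cfq]
  | append_singleton l b ih =>
    have hb : 0 < b := hl b (by simp)
    have hbR : (0 : ℝ) < (b : ℝ) := by exact_mod_cast hb
    rw [cast_cfq_append, hv_formula l a (b : ℝ) (fun c hc => hl c (by simp [hc])) hbR,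
      cfPair_append]
    dsimp only
    push_cast
    ring_nf

lemma cfq_ge_one : ∀ (m : List ℕ) (b : ℕ), 0 < b → (∀ c ∈ m, 0 < c) →
    (1 : ℚ) ≤ cfq (b : ℤ) m := by
  intro m
  induction m with
  | nil =>
    intro b hb _
    rw [cfq]
    exact_mod_cast hb
  | cons c m ih =>
    intro b hb hm
    rw [cfq]
    have hc := ih c (hm c (by simp)) (fun d hd => hm d (by simp [hd]))
    have : (0 : ℚ) < (cfq (c : ℤ) m)⁻¹ := by positivity
    have hb1 : (1 : ℚ) ≤ (b : ℚ) := by exact_mod_cast hb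
    push_cast
    linarith

lemma cfPair_coprime (a : ℤ) (l : List ℕ) :
    IsCoprime (cfPair a l).1.1 (cfPair a l).2.1 := by
  have hdet := cfPair_det a l
  rcases Nat.even_or_odd (l.length + 1) with he | ho
  · rw [he.neg_one_pow] at hdet
    exact ⟨(cfPair a l).2.2, -(cfPair a l).1.2, by linarith [hdet]⟩
  · rw [ho.neg_one_pow] at hdet
    exact ⟨-(cfPair a l).2.2, (cfPair a l).1.2, by linarith [hdet]⟩

/-- If `p/q = P/Q` with both coprime pairs and positive denominators, then `p = P, q = Q`. -/
lemma rat_eq_unique {p q P Q : ℤ} (hq : 0 < q) (hQ : 0 < Q)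
    (hcop : IsCoprime p q) (hcop' : IsCoprime P Q)
    (h : (p : ℝ) / (q : ℝ) = (P : ℝ) / (Q : ℝ)) : p = P ∧ q = Q := by
  have hq' : ((q : ℝ)) ≠ 0 := by positivity
  have hQ' : ((Q : ℝ)) ≠ 0 := by positivity
  have hcross : (p : ℝ) * (Q : ℝ) = (P : ℝ) * (q : ℝ) := by
    field_simp at h
    linarith [h]
  have hcrossZ : p * Q = P * q := by exact_mod_cast hcross
  have h1 : q ∣ Q := by
    have : q ∣ p * Q := ⟨P, by linarith [hcrossZ]⟩
    exact (IsCoprime.dvd_of_dvd_mul_left (hcop.symm) this)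
  have h2 : Q ∣ q := by
    have : Q ∣ P * q := ⟨p, by linarith [hcrossZ]⟩
    exact (IsCoprime.dvd_of_dvd_mul_left (hcop'.symm) this)
  have hqQ : q = Q := Int.dvd_antisymm (le_of_lt hq) (le_of_lt hQ) h1 h2
  subst hqQ
  refine ⟨?_, rfl⟩
  have := mul_right_cancel₀ (by omega : q ≠ 0) hcrossZ
  exact this

/-! ### The canonical continued fraction expansion of an irrational number -/

noncomputable def gaussSeq (γ : ℝ) : ℕ → ℝ
  | 0 => γ
  | n + 1 => (Int.fract (gaussSeq γ n))⁻¹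

noncomputable def cseq (γ : ℝ) (n : ℕ) : ℕ := (⌊gaussSeq γ (n + 1)⌋).toNat

lemma gaussSeq_irrational {γ : ℝ} (h : Irrational γ) : ∀ n, Irrational (gaussSeq γ n) := by
  intro n
  induction n with
  | zero => exact h
  | succ n ih =>
    show Irrational (Int.fract (gaussSeq γ n))⁻¹
    have : Irrational (Int.fract (gaussSeq γ n)) := by
      rw [Int.fract]
      exact ih.sub_intCast _
    exact this.inv

lemma gaussSeq_gt_one {γ : ℝ} (h : Irrational γ) (n : ℕ) : 1 < gaussSeq γ (n + 1) := by
  have hirr := gaussSeq_irrational h n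
  have h0 : 0 < Int.fract (gaussSeq γ n) := by
    rcases lt_or_eq_of_le (Int.fract_nonneg (gaussSeq γ n)) with h' | h'
    · exact h'
    · exfalso
      have : Irrational (Int.fract (gaussSeq γ n)) := by
        rw [Int.fract]; exact hirr.sub_intCast _
      rw [← h'] at this
      exact not_irrational_zero this
  have h1 : Int.fract (gaussSeq γ n) < 1 := Int.fract_lt_one _
  show 1 < (Int.fract (gaussSeq γ n))⁻¹
  rw [lt_inv_comm₀ one_pos h0] at *
  · simpa using h1
  
lemma cseq_pos {γ : ℝ} (h : Irrational γ) (n : ℕ) : 0 < cseq γ n := by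
  have := gaussSeq_gt_one h n
  have : 1 ≤ ⌊gaussSeq γ (n + 1)⌋ := by
    rw [Int.le_floor]; push_cast; linarith
  unfold cseq; omega

lemma cseq_cast {γ : ℝ} (h : Irrational γ) (n : ℕ) :
    ((cseq γ n : ℤ) : ℝ) = (⌊gaussSeq γ (n + 1)⌋ : ℝ) := by
  have := gaussSeq_gt_one h n
  have h1 : 1 ≤ ⌊gaussSeq γ (n + 1)⌋ := by rw [Int.le_floor]; push_cast; linarith
  unfold cseq
  rw [Int.toNat_of_nonneg (by omega)]

lemma gauss_hv {γ : ℝ} (h : Irrational γ) : ∀ n,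
    hv ⌊γ⌋ (pref (cseq γ) n) (gaussSeq γ (n + 1)) = γ := by
  have fract_ne : ∀ n, Int.fract (gaussSeq γ n) ≠ 0 := by
    intro n
    intro h0
    have : Irrational (Int.fract (gaussSeq γ n)) := by
      rw [Int.fract]; exact (gaussSeq_irrational h n).sub_intCast _
    rw [h0] at this
    exact not_irrational_zero this
  intro n
  induction n with
  | zero =>
    rw [pref_zero, hv_nil]
    show (⌊γ⌋ : ℝ) + ((Int.fract (gaussSeq γ 0))⁻¹)⁻¹ = γ
    rw [inv_inv]
    show (⌊γ⌋ : ℝ) + Int.fract γ = γ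
    exact Int.floor_add_fract γ
  | succ n ih =>
    rw [pref_succ, hv_append]
    have key : ((cseq γ n : ℕ) : ℝ) + (gaussSeq γ (n + 2))⁻¹ = gaussSeq γ (n + 1) := by
      have h1 : gaussSeq γ (n + 2) = (Int.fract (gaussSeq γ (n + 1)))⁻¹ := rfl
      rw [h1, inv_inv]
      have h2 : ((cseq γ n : ℕ) : ℝ) = (⌊gaussSeq γ (n + 1)⌋ : ℝ) := by
        have := cseq_cast h n; push_cast at this ⊢; linarith
      rw [h2]
      exact Int.floor_add_fract _
    rw [key, ih]

/-! ### General facts about convergents of a sequence of partial quotients -/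

section SeqFacts

variable {a₀ : ℤ} {a : ℕ → ℕ}

lemma pref_pos (a : ℕ → ℕ) (hpos : ∀ i, 0 < a i) : ∀ n, ∀ b ∈ pref a n, 0 < b := by
  intro n b hb
  obtain ⟨i, hi⟩ := mem_pref hb
  rw [← hi]; exact hpos i

lemma cfPair_pref_succ (a₀ : ℤ) (a : ℕ → ℕ) (n : ℕ) :
    cfPair a₀ (pref a (n + 1)) =
      (((a n : ℤ) * (cfPair a₀ (pref a n)).1.1 + (cfPair a₀ (pref a n)).1.2,
          (cfPair a₀ (pref a n)).1.1),
       ((a n : ℤ) * (cfPair a₀ (pref a n)).2.1 + (cfPair a₀ (pref a n)).2.2,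
          (cfPair a₀ (pref a n)).2.1)) := by
  rw [pref_succ, cfPair_append]

lemma seqQ_ge (a₀ : ℤ) (a : ℕ → ℕ) (hpos : ∀ i, 0 < a i) : ∀ n : ℕ, (n : ℤ) ≤ (cfPair a₀ (pref a n)).2.1 := by
  intro n
  induction n with
  | zero => simp [pref_zero, cfPair_nil]
  | succ n ih =>
    rw [cfPair_pref_succ]
    dsimp only
    have han : (1 : ℤ) ≤ (a n : ℤ) := by exact_mod_cast hpos n
    obtain ⟨h1, h2, h3⟩ := cfPair_q_nonneg a₀ (pref a n) (pref_pos a hpos n)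
    rcases Nat.eq_zero_or_pos n with rfl | hn
    · push_cast; nlinarith
    · have : 1 ≤ (cfPair a₀ (pref a n)).2.2 := by
        apply cfPair_q'_pos a₀ (pref a n) _ (pref_pos a hpos n)
        intro hnil
        have := length_pref a n
        rw [hnil] at this
        simp at this
        omega
      push_cast
      nlinarith

/-- The difference of consecutive convergents. -/
lemma conv_diff (a₀ : ℤ) (a : ℕ → ℕ) (hpos : ∀ i, 0 < a i) (n : ℕ) :
    ((cfq a₀ (pref a (n + 1)) : ℚ) : ℝ) - ((cfq a₀ (pref a n) : ℚ) : ℝ) =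
      (-1 : ℝ) ^ n /
        (((cfPair a₀ (pref a n)).2.1 : ℝ) * ((cfPair a₀ (pref a (n + 1))).2.1 : ℝ)) := by
  have hQ := cfPair_q_nonneg a₀ (pref a n) (pref_pos a hpos n)
  have hQ' := cfPair_q_nonneg a₀ (pref a (n + 1)) (pref_pos a hpos (n + 1))
  have hQR : (0 : ℝ) < ((cfPair a₀ (pref a n)).2.1 : ℝ) := by
    have := hQ.2.2; exact_mod_cast (by omega : (0:ℤ) < (cfPair a₀ (pref a n)).2.1)
  have hQR' : (0 : ℝ) < ((cfPair a₀ (pref a (n + 1))).2.1 : ℝ) := by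
    have := hQ'.2.2; exact_mod_cast (by omega : (0:ℤ) < (cfPair a₀ (pref a (n+1))).2.1)
  rw [cast_cfq_eq a₀ (pref a n) (pref_pos a hpos n),
    cast_cfq_eq a₀ (pref a (n + 1)) (pref_pos a hpos (n + 1))]
  have hdet := cfPair_det a₀ (pref a (n + 1))
  rw [length_pref] at hdet
  have hP' : (cfPair a₀ (pref a (n + 1))).1.2 = (cfPair a₀ (pref a n)).1.1 := by
    rw [cfPair_pref_succ]
  have hQ2' : (cfPair a₀ (pref a (n + 1))).2.2 = (cfPair a₀ (pref a n)).2.1 := by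
    rw [cfPair_pref_succ]
  rw [hP', hQ2'] at hdet
  -- hdet : P_{n+1} * Q_n - P_n * Q_{n+1} = (-1)^(n+2)
  have key : ((cfPair a₀ (pref a (n+1))).1.1 : ℝ) * ((cfPair a₀ (pref a n)).2.1 : ℝ)
      - ((cfPair a₀ (pref a n)).1.1 : ℝ) * ((cfPair a₀ (pref a (n+1))).2.1 : ℝ)
      = (-1 : ℝ) ^ n := by
    have : ((-1 : ℤ) ^ (n + 1 + 1) : ℤ) = (-1 : ℤ) ^ n := by
      rw [pow_succ, pow_succ]; ring
    rw [this] at hdet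
    have := congrArg (fun z : ℤ => (z : ℝ)) hdet
    push_cast at this
    convert this using 2 <;> push_cast <;> ring
  rw [div_sub_div _ _ (ne_of_gt hQR') (ne_of_gt hQR)]
  rw [mul_comm (((cfPair a₀ (pref a n)).2.1 : ℝ)) _] at *
  congr 1
  linarith [key]

end SeqFacts

section Interleave

noncomputable def cx (a₀ : ℤ) (a : ℕ → ℕ) (k : ℕ) : ℝ := ((cfq a₀ (pref a k) : ℚ) : ℝ)

def cQ (a₀ : ℤ) (a : ℕ → ℕ) (k : ℕ) : ℤ := (cfPair a₀ (pref a k)).2.1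

lemma cQ_pos (a₀ : ℤ) (a : ℕ → ℕ) (hpos : ∀ i, 0 < a i) (k : ℕ) : 0 < cQ a₀ a k := by
  have := (cfPair_q_nonneg a₀ (pref a k) (pref_pos a hpos k)).2.2
  unfold cQ; omega

lemma cQR_pos (a₀ : ℤ) (a : ℕ → ℕ) (hpos : ∀ i, 0 < a i) (k : ℕ) :
    (0 : ℝ) < ((cQ a₀ a k : ℤ) : ℝ) := by
  exact_mod_cast cQ_pos a₀ a hpos k

lemma cx_diff (a₀ : ℤ) (a : ℕ → ℕ) (hpos : ∀ i, 0 < a i) (k : ℕ) :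
    cx a₀ a (k + 1) - cx a₀ a k =
      (-1 : ℝ) ^ k / (((cQ a₀ a k : ℤ) : ℝ) * ((cQ a₀ a (k + 1) : ℤ) : ℝ)) :=
  conv_diff a₀ a hpos k

lemma cQ_lt (a₀ : ℤ) (a : ℕ → ℕ) (hpos : ∀ i, 0 < a i) (k : ℕ) :
    cQ a₀ a k < cQ a₀ a (k + 2) := by
  have h1 : cQ a₀ a (k + 2) = (a (k + 1) : ℤ) * cQ a₀ a (k + 1) + cQ a₀ a k := by
    unfold cQ
    rw [cfPair_pref_succ a₀ a (k + 1)]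
    dsimp only
    congr 1
    rw [cfPair_pref_succ a₀ a k]
  have h2 := cQ_pos a₀ a hpos (k + 1)
  have h3 : (1 : ℤ) ≤ (a (k + 1) : ℤ) := by exact_mod_cast hpos (k + 1)
  nlinarith

lemma cx_even_step (a₀ : ℤ) (a : ℕ → ℕ) (hpos : ∀ i, 0 < a i) (k : ℕ) (hk : Even k) :
    cx a₀ a k < cx a₀ a (k + 2) := by
  have d1 := cx_diff a₀ a hpos k
  have d2 := cx_diff a₀ a hpos (k + 1)
  have hk1 : Odd (k + 1) := Even.add_one hk
  rw [hk.neg_one_pow] at d1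
  rw [hk1.neg_one_pow] at d2
  have q0 := cQR_pos a₀ a hpos k
  have q1 := cQR_pos a₀ a hpos (k + 1)
  have q2 := cQR_pos a₀ a hpos (k + 2)
  have hlt : ((cQ a₀ a k : ℤ) : ℝ) < ((cQ a₀ a (k + 2) : ℤ) : ℝ) := by
    exact_mod_cast cQ_lt a₀ a hpos k
  have key : (1 : ℝ) / (((cQ a₀ a (k+1) : ℤ) : ℝ) * ((cQ a₀ a (k + 2) : ℤ) : ℝ))
      < 1 / (((cQ a₀ a k : ℤ) : ℝ) * ((cQ a₀ a (k + 1) : ℤ) : ℝ)) := by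
    apply one_div_lt_one_div_of_lt (by positivity)
    nlinarith
  have e1 : (1:ℝ) / (((cQ a₀ a k : ℤ) : ℝ) * ((cQ a₀ a (k + 1) : ℤ) : ℝ))
      = cx a₀ a (k+1) - cx a₀ a k := by rw [d1]
  have e2 : (1:ℝ) / (((cQ a₀ a (k+1) : ℤ) : ℝ) * ((cQ a₀ a (k + 2) : ℤ) : ℝ))
      = -(cx a₀ a (k+2) - cx a₀ a (k+1)) := by rw [d2]; ring_nf
  rw [e1, e2] at key
  linarith

lemma cx_odd_step (a₀ : ℤ) (a : ℕ → ℕ) (hpos : ∀ i, 0 < a i) (k : ℕ) (hk : Odd k) :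
    cx a₀ a (k + 2) < cx a₀ a k := by
  have d1 := cx_diff a₀ a hpos k
  have d2 := cx_diff a₀ a hpos (k + 1)
  have hk1 : Even (k + 1) := Odd.add_one hk
  rw [hk.neg_one_pow] at d1
  rw [hk1.neg_one_pow] at d2
  have q0 := cQR_pos a₀ a hpos k
  have q1 := cQR_pos a₀ a hpos (k + 1)
  have q2 := cQR_pos a₀ a hpos (k + 2)
  have hlt : ((cQ a₀ a k : ℤ) : ℝ) < ((cQ a₀ a (k + 2) : ℤ) : ℝ) := by
    exact_mod_cast cQ_lt a₀ a hpos k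
  have key : (1 : ℝ) / (((cQ a₀ a (k+1) : ℤ) : ℝ) * ((cQ a₀ a (k + 2) : ℤ) : ℝ))
      < 1 / (((cQ a₀ a k : ℤ) : ℝ) * ((cQ a₀ a (k + 1) : ℤ) : ℝ)) := by
    apply one_div_lt_one_div_of_lt (by positivity)
    nlinarith
  have e1 : (1:ℝ) / (((cQ a₀ a k : ℤ) : ℝ) * ((cQ a₀ a (k + 1) : ℤ) : ℝ))
      = -(cx a₀ a (k+1) - cx a₀ a k) := by rw [d1]; ring_nf
  have e2 : (1:ℝ) / (((cQ a₀ a (k+1) : ℤ) : ℝ) * ((cQ a₀ a (k + 2) : ℤ) : ℝ))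
      = cx a₀ a (k+2) - cx a₀ a (k+1) := by rw [d2]
  rw [e1, e2] at key
  linarith

lemma cx_even_mono (a₀ : ℤ) (a : ℕ → ℕ) (hpos : ∀ i, 0 < a i) {i j : ℕ} (h : i ≤ j) :
    cx a₀ a (2 * i) ≤ cx a₀ a (2 * j) := by
  induction j with
  | zero =>
    have : i = 0 := by omega
    rw [this]
  | succ j ih =>
    rcases Nat.lt_or_ge i (j + 1) with h' | h'
    · have h1 := ih (by omega)
      have hj : Even (2 * j) := ⟨j, by ring⟩
      have h2 := cx_even_step a₀ a hpos (2 * j) hj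
      have : 2 * (j + 1) = 2 * j + 2 := by ring
      rw [this]
      linarith
    · have : i = j + 1 := by omega
      rw [this]

lemma cx_odd_anti (a₀ : ℤ) (a : ℕ → ℕ) (hpos : ∀ i, 0 < a i) {i j : ℕ} (h : i ≤ j) :
    cx a₀ a (2 * j + 1) ≤ cx a₀ a (2 * i + 1) := by
  induction j with
  | zero => have : i = 0 := by omega
            rw [this]
  | succ j ih =>
    rcases Nat.lt_or_ge i (j + 1) with h' | h'
    · have h1 := ih (by omega)
      have hj : Odd (2 * j + 1) := ⟨j, by ring⟩
      have h2 := cx_odd_step a₀ a hpos (2 * j + 1) hj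
      have : 2 * (j + 1) + 1 = 2 * j + 1 + 2 := by ring
      rw [this]
      linarith
    · have : i = j + 1 := by omega
      rw [this]

lemma cx_even_lt_odd (a₀ : ℤ) (a : ℕ → ℕ) (hpos : ∀ i, 0 < a i) (i j : ℕ) :
    cx a₀ a (2 * i) < cx a₀ a (2 * j + 1) := by
  set c := max i j with hc
  have h1 : cx a₀ a (2 * i) ≤ cx a₀ a (2 * c) :=
    cx_even_mono a₀ a hpos (le_max_left i j)
  have h3 : cx a₀ a (2 * c + 1) ≤ cx a₀ a (2 * j + 1) :=
    cx_odd_anti a₀ a hpos (le_max_right i j)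
  have h2 : cx a₀ a (2 * c) < cx a₀ a (2 * c + 1) := by
    have d := cx_diff a₀ a hpos (2 * c)
    have hec : Even (2 * c) := ⟨c, by ring⟩
    rw [hec.neg_one_pow] at d
    have q0 := cQR_pos a₀ a hpos (2 * c)
    have q1 := cQR_pos a₀ a hpos (2 * c + 1)
    have : (0:ℝ) < 1 / (((cQ a₀ a (2*c) : ℤ) : ℝ) * ((cQ a₀ a (2*c+1) : ℤ) : ℝ)) := by positivity
    linarith
  linarith

lemma cx_lt_lim (a₀ : ℤ) (a : ℕ → ℕ) (hpos : ∀ i, 0 < a i) {α : ℝ}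
    (hlim : Tendsto (cx a₀ a) atTop (nhds α)) (i : ℕ) :
    cx a₀ a (2 * i) < α ∧ α < cx a₀ a (2 * i + 1) := by
  constructor
  · have step : cx a₀ a (2 * i) < cx a₀ a (2 * (i + 1)) := by
      have hei : Even (2 * i) := ⟨i, by ring⟩
      have := cx_even_step a₀ a hpos (2 * i) hei
      have e : 2 * (i + 1) = 2 * i + 2 := by ring
      rw [e]; exact this
    have hge : ∀ k ≥ 2 * (i + 1), cx a₀ a (2 * (i + 1)) ≤ cx a₀ a k := by
      intro k hk
      rcases Nat.even_or_odd k with ⟨u, hu⟩ | ⟨u, hu⟩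
      · have : k = 2 * u := by omega
        rw [this]
        exact cx_even_mono a₀ a hpos (by omega)
      · have : k = 2 * u + 1 := by omega
        rw [this]
        exact le_of_lt (cx_even_lt_odd a₀ a hpos (i + 1) u)
    have : cx a₀ a (2 * (i + 1)) ≤ α :=
      ge_of_tendsto hlim (Filter.eventually_atTop.mpr ⟨2 * (i + 1), hge⟩)
    linarith
  · have step : cx a₀ a (2 * (i + 1) + 1) < cx a₀ a (2 * i + 1) := by
      have hoi : Odd (2 * i + 1) := ⟨i, by ring⟩
      have := cx_odd_step a₀ a hpos (2 * i + 1) hoi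
      have e : 2 * (i + 1) + 1 = 2 * i + 1 + 2 := by ring
      rw [e]; exact this
    have hle : ∀ k ≥ 2 * (i + 1) + 1, cx a₀ a k ≤ cx a₀ a (2 * (i + 1) + 1) := by
      intro k hk
      rcases Nat.even_or_odd k with ⟨u, hu⟩ | ⟨u, hu⟩
      · have : k = 2 * u := by omega
        rw [this]
        exact le_of_lt (cx_even_lt_odd a₀ a hpos u (i + 1))
      · have : k = 2 * u + 1 := by omega
        rw [this]
        exact cx_odd_anti a₀ a hpos (by omega)
    have : α ≤ cx a₀ a (2 * (i + 1) + 1) :=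
      le_of_tendsto hlim (Filter.eventually_atTop.mpr ⟨2 * (i + 1) + 1, hle⟩)
    linarith

end Interleave

lemma gauss_bound {γ : ℝ} (h : Irrational γ) (n : ℕ) (hn : 1 ≤ n) :
    |((cfq ⌊γ⌋ (pref (cseq γ) n) : ℚ) : ℝ) - γ| ≤ 1 / (n : ℝ) := by
  have hcpos : ∀ i, 0 < cseq γ i := cseq_pos h
  have hlp : ∀ b ∈ pref (cseq γ) n, 0 < b := pref_pos (cseq γ) hcpos n
  have ht : 1 < gaussSeq γ (n + 1) := gaussSeq_gt_one h n
  set t := gaussSeq γ (n + 1)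
  set PP : ℝ := ((cfPair ⌊γ⌋ (pref (cseq γ) n)).1.1 : ℝ) with hPP
  set PB : ℝ := ((cfPair ⌊γ⌋ (pref (cseq γ) n)).1.2 : ℝ) with hPB
  set QQ : ℝ := ((cfPair ⌊γ⌋ (pref (cseq γ) n)).2.1 : ℝ) with hQQ
  set QB : ℝ := ((cfPair ⌊γ⌋ (pref (cseq γ) n)).2.2 : ℝ) with hQB
  have hq := cfPair_q_nonneg ⌊γ⌋ (pref (cseq γ) n) hlp
  have hQQ1 : (1 : ℝ) ≤ QQ := by rw [hQQ]; exact_mod_cast hq.2.2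
  have hQB0 : (0 : ℝ) ≤ QB := by rw [hQB]; exact_mod_cast hq.1
  have hQn : (n : ℝ) ≤ QQ := by
    have := seqQ_ge ⌊γ⌋ (cseq γ) hcpos n
    rw [hQQ]; exact_mod_cast this
  have hγeq : (PP * t + PB) / (QQ * t + QB) = γ := by
    rw [← hv_formula (pref (cseq γ) n) ⌊γ⌋ t hlp (by linarith)]
    exact gauss_hv h n
  have hcx : ((cfq ⌊γ⌋ (pref (cseq γ) n) : ℚ) : ℝ) = PP / QQ :=
    cast_cfq_eq ⌊γ⌋ (pref (cseq γ) n) hlp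
  have hD : (0 : ℝ) < QQ * t + QB := by nlinarith
  have hdet : PP * QB - PB * QQ = (-1 : ℝ) ^ (n + 1) := by
    have := cfPair_det ⌊γ⌋ (pref (cseq γ) n)
    rw [length_pref] at this
    rw [hPP, hPB, hQQ, hQB]
    exact_mod_cast this
  have he : ((cfq ⌊γ⌋ (pref (cseq γ) n) : ℚ) : ℝ) - γ
      = (PP * QB - PB * QQ) / (QQ * (QQ * t + QB)) := by
    rw [hcx, ← hγeq]
    field_simp
    ring
  rw [he, abs_div, hdet]
  have h1 : |(-1 : ℝ) ^ (n + 1)| = 1 := by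
    rw [abs_pow, abs_neg, abs_one, one_pow]
  rw [h1, abs_of_pos (by nlinarith : (0:ℝ) < QQ * (QQ * t + QB))]
  apply one_div_le_one_div_of_le
  · exact_mod_cast Nat.lt_of_lt_of_le Nat.zero_lt_one hn
  · nlinarith

lemma gauss_tendsto {γ : ℝ} (h : Irrational γ) :
    Tendsto (fun n => ((cfq ⌊γ⌋ (pref (cseq γ) n) : ℚ) : ℝ)) atTop (nhds γ) := by
  rw [tendsto_iff_dist_tendsto_zero]
  refine squeeze_zero' (Filter.Eventually.of_forall fun n => dist_nonneg) ?_
    tendsto_one_div_atTop_nhds_zero_nat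
  filter_upwards [Filter.eventually_ge_atTop 1] with n hn
  rw [Real.dist_eq]
  exact gauss_bound h n hn

/-- If `α = (Pβ + P')/(Qβ + Q')` with `β > 1` irrational, then `α` has an infinite
continued fraction expansion starting with `a₀ :: l`. -/
lemma exists_expansion (α : ℝ) (a₀ : ℤ) (l : List ℕ) (hl : ∀ b ∈ l, 0 < b)
    {β : ℝ} (hβirr : Irrational β) (hβ1 : 1 < β)
    (hα : α = (((cfPair a₀ l).1.1 : ℝ) * β + ((cfPair a₀ l).1.2 : ℝ)) /
      (((cfPair a₀ l).2.1 : ℝ) * β + ((cfPair a₀ l).2.2 : ℝ))) :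
    ∃ a : ℕ → ℕ, (∀ i, 0 < a i) ∧
      Tendsto (fun k => ((cfq a₀ (pref a k) : ℚ) : ℝ)) atTop (nhds α) ∧
      pref a l.length = l := by
  classical
  set n := l.length with hn
  set c : ℕ → ℕ := fun j => match j with
    | 0 => (⌊β⌋).toNat
    | j + 1 => cseq β j with hc
  have hfloor : 1 ≤ ⌊β⌋ := by
    rw [Int.le_floor]; push_cast; linarith
  have hc0 : ((c 0 : ℕ) : ℤ) = ⌊β⌋ := Int.toNat_of_nonneg (by omega)
  have hcpos : ∀ j, 0 < c j := by
    intro j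
    match j with
    | 0 => show 0 < (⌊β⌋).toNat; omega
    | j + 1 => exact cseq_pos hβirr j
  set A : ℕ → ℕ := fun i => if h : i < n then l[i] else c (i - n) with hA
  have hApos : ∀ i, 0 < A i := by
    intro i
    rw [hA]
    dsimp only
    split_ifs with h
    · exact hl _ (List.getElem_mem h)
    · exact hcpos _
  have hprefA : ∀ j, pref A (n + j) = l ++ pref c j := by
    intro j
    induction j with
    | zero =>
      rw [Nat.add_zero, pref_zero, List.append_nil]
      apply List.ext_getElem
      · rw [length_pref]
      · intro i h1 h2
        have hi : i < n := by rwa [length_pref] at h1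
        simp only [pref, List.getElem_ofFn]
        rw [hA]
        simp [hi]
    | succ j ih =>
      have : n + (j + 1) = (n + j) + 1 := by omega
      rw [this, pref_succ, ih, pref_succ, List.append_assoc]
      congr 2
      have hnj : ¬ (n + j < n) := by omega
      have : A (n + j) = c (n + j - n) := by rw [hA]; dsimp only; rw [dif_neg hnj]
      rw [this, Nat.add_sub_cancel_left]
  set y : ℕ → ℝ := fun j => ((cfq ((c 0 : ℕ) : ℤ) (pref (fun i => c (i + 1)) j) : ℚ) : ℝ)
    with hy
  have hyt : Tendsto y atTop (nhds β) := by
    have : y = fun j => ((cfq ⌊β⌋ (pref (cseq β) j) : ℚ) : ℝ) := by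
      funext j
      rw [hy]
      dsimp only
      rw [hc0]
    rw [this]
    exact gauss_tendsto hβirr
  have hypos : ∀ j, (0 : ℝ) < y j := by
    intro j
    have h1 : (1 : ℚ) ≤ cfq ((c 0 : ℕ) : ℤ) (pref (fun i => c (i + 1)) j) := by
      apply cfq_ge_one _ _ (hcpos 0)
      exact pref_pos _ (fun i => hcpos (i + 1)) j
    rw [hy]
    have : (1 : ℝ) ≤ ((cfq ((c 0 : ℕ) : ℤ) (pref (fun i => c (i + 1)) j) : ℚ) : ℝ) := by
      exact_mod_cast h1
    linarith
  have hx : ∀ j, ((cfq a₀ (pref A (n + j + 1)) : ℚ) : ℝ) =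
      (((cfPair a₀ l).1.1 : ℝ) * y j + ((cfPair a₀ l).1.2 : ℝ)) /
        (((cfPair a₀ l).2.1 : ℝ) * y j + ((cfPair a₀ l).2.2 : ℝ)) := by
    intro j
    have e1 : n + j + 1 = n + (j + 1) := by omega
    rw [e1, hprefA (j + 1), pref_cons, cast_cfq_split, hv_formula l a₀ _ hl (hypos j)]
  have hden : (0 : ℝ) < ((cfPair a₀ l).2.1 : ℝ) * β + ((cfPair a₀ l).2.2 : ℝ) := by
    have hq := cfPair_q_nonneg a₀ l hl
    have h1 : (1 : ℝ) ≤ ((cfPair a₀ l).2.1 : ℝ) := by exact_mod_cast hq.2.2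
    have h2 : (0 : ℝ) ≤ ((cfPair a₀ l).2.2 : ℝ) := by exact_mod_cast hq.1
    nlinarith
  have htend2 : Tendsto (fun j => ((cfq a₀ (pref A (n + j + 1)) : ℚ) : ℝ)) atTop (nhds α) := by
    have : Tendsto (fun j => (((cfPair a₀ l).1.1 : ℝ) * y j + ((cfPair a₀ l).1.2 : ℝ)) /
        (((cfPair a₀ l).2.1 : ℝ) * y j + ((cfPair a₀ l).2.2 : ℝ))) atTop (nhds α) := by
      rw [hα]
      exact Tendsto.div ((hyt.const_mul _).add_const _) ((hyt.const_mul _).add_const _)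
        (ne_of_gt hden)
    have heq : (fun j => ((cfq a₀ (pref A (n + j + 1)) : ℚ) : ℝ)) = fun j =>
        (((cfPair a₀ l).1.1 : ℝ) * y j + ((cfPair a₀ l).1.2 : ℝ)) /
          (((cfPair a₀ l).2.1 : ℝ) * y j + ((cfPair a₀ l).2.2 : ℝ)) := funext hx
    rw [heq]
    exact this
  refine ⟨A, hApos, ?_, by have := hprefA 0; rwa [Nat.add_zero, pref_zero, List.append_nil] at this⟩
  rw [← Filter.tendsto_add_atTop_iff_nat (n + 1)]
  have heq2 : (fun j => ((cfq a₀ (pref A (j + (n + 1))) : ℚ) : ℝ)) = fun j =>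
      ((cfq a₀ (pref A (n + j + 1)) : ℚ) : ℝ) := by
    funext j
    have e : j + (n + 1) = n + j + 1 := by omega
    rw [e]
  exact heq2 ▸ htend2

lemma beta_irrational (α : ℝ) (hirr : Irrational α) (P P' Q Q' : ℤ)
    (hdet : ((P : ℝ) * Q' - P' * Q) ≠ 0) (hD : (Q : ℝ) * α - P ≠ 0) :
    Irrational (((P' : ℝ) - Q' * α) / ((Q : ℝ) * α - P)) := by
  by_contra hbr
  have hmem : ((P' : ℝ) - Q' * α) / ((Q : ℝ) * α - P) ∈ Set.range ((↑) : ℚ → ℝ) :=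
    not_not.mp hbr
  obtain ⟨r, hr⟩ := hmem
  have hβD : ((r : ℝ)) * ((Q : ℝ) * α - P) = (P' : ℝ) - Q' * α := by
    rw [hr]
    exact div_mul_cancel₀ _ hD
  have hαe : α * ((r : ℝ) * Q + Q') = (P' : ℝ) + r * P := by linear_combination hβD
  have hden2 : (r : ℝ) * Q + Q' ≠ 0 := by
    intro h0
    have hP0 : (P' : ℝ) + r * P = 0 := by rw [← hαe, h0, mul_zero]
    have : ((P : ℝ) * Q' - P' * Q) = 0 := by linear_combination (P : ℝ) * h0 - (Q : ℝ) * hP0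
    exact hdet this
  refine hirr ⟨((P' : ℚ) + r * (P : ℚ)) / ((r : ℚ) * (Q : ℚ) + (Q' : ℚ)), ?_⟩
  push_cast
  rw [eq_comm, eq_div_iff hden2]
  linarith [hαe]

lemma alpha_eq_frac (α : ℝ) (P P' Q Q' : ℝ) (hD : Q * α - P ≠ 0)
    (hden : Q * ((P' - Q' * α) / (Q * α - P)) + Q' ≠ 0) :
    α = (P * ((P' - Q' * α) / (Q * α - P)) + P') /
      (Q * ((P' - Q' * α) / (Q * α - P)) + Q') := by
  rw [eq_div_iff hden]
  linear_combination (P' - Q' * α) * mul_inv_cancel₀ hD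

set_option maxHeartbeats 1000000 in
/-- **Legendre's criterion for irrational numbers.** Let `α` be
irrational, `p/q` in lowest terms with `q ≥ 1`, and `p/q = [a₀; a₁, …, aₙ]` the
expansion of `p/q` with `n` even if `α > p/q` and `n` odd if `α < p/q`; let `q'` be the
denominator of its second-to-last convergent `[a₀; a₁, …, aₙ₋₁]` in lowest terms.
Then `p/q` is a convergent of the expansion of `α` iff `|α - p/q| < 1/(q(q + q'))`. -/
theorem legendre_criterion_irrational (α : ℝ) (hirr : Irrational α)
    (p q : ℤ) (hq : 1 ≤ q) (hcop : IsCoprime p q)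
    (a₀ : ℤ) (l : List ℕ) (hl : ∀ b ∈ l, 0 < b)
    (hval : cfq a₀ l = (p : ℚ) / (q : ℚ))
    (hpar₁ : (p : ℝ) / (q : ℝ) < α → Even l.length)
    (hpar₂ : α < (p : ℝ) / (q : ℝ) → Odd l.length) :
    IsConvergentOf ((p : ℚ) / (q : ℚ)) α ↔
      |α - (p : ℝ) / (q : ℝ)| < 1 / ((q : ℝ) * ((q : ℝ) + ((cfPair a₀ l).2.2 : ℝ))) := by
  have hq0 : (0 : ℤ) < q := by omega
  have hqR : (0 : ℝ) < (q : ℝ) := by exact_mod_cast hq0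
  have hQfacts := cfPair_q_nonneg a₀ l hl
  have hQ0 : (0 : ℤ) < (cfPair a₀ l).2.1 := by omega
  have hvalR : ((cfq a₀ l : ℚ) : ℝ) = (p : ℝ) / (q : ℝ) := by rw [hval]; push_cast; ring
  obtain ⟨hp, hq2⟩ := rat_eq_unique hq0 hQ0 hcop (cfPair_coprime a₀ l)
    (hvalR.symm.trans (cast_cfq_eq a₀ l hl))
  set p' : ℤ := (cfPair a₀ l).1.2 with hp'd
  set q' : ℤ := (cfPair a₀ l).2.2 with hq'd
  have hq'0 : 0 ≤ q' := hQfacts.1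
  have hq'q : q' ≤ q := by rw [hq2]; exact hQfacts.2.1
  have hq'R : (0 : ℝ) ≤ (q' : ℝ) := by exact_mod_cast hq'0
  have hdenR : (0 : ℝ) < (q : ℝ) * ((q : ℝ) + (q' : ℝ)) := by nlinarith
  have hdetz : p * q' - p' * q = (-1) ^ (l.length + 1) := by
    rw [hp, hq2, hp'd, hq'd]; exact cfPair_det a₀ l
  have hne : α ≠ (p : ℝ) / (q : ℝ) := by
    intro h
    exact hirr ⟨(p : ℚ) / (q : ℚ), by rw [h]; push_cast; ring⟩
  rcases lt_or_gt_of_ne hne with hcase | hcase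
  · -- α < p/q
    have hodd : Odd l.length := hpar₂ hcase
    have hdetn : p * q' - p' * q = 1 := by
      rw [hdetz, (hodd.add_one).neg_one_pow]
    have hdetR : (p : ℝ) * (q' : ℝ) - (p' : ℝ) * (q : ℝ) = 1 := by exact_mod_cast hdetn
    constructor
    · -- forward
      intro hconv
      rcases hconv with ⟨b₀, m0, _, hvalm, _⟩ | ⟨b₀, b, hbpos, hblim, m, hm⟩
      · exact absurd ⟨_, hvalm⟩ hirr
      · have hprefpos := pref_pos b hbpos m
        have hmR : ((cfq b₀ (pref b m) : ℚ) : ℝ) = (p : ℝ) / (q : ℝ) := by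
          rw [hm]; push_cast; ring
        have hQm0 : (0 : ℤ) < (cfPair b₀ (pref b m)).2.1 := by
          have := (cfPair_q_nonneg b₀ (pref b m) hprefpos).2.2; omega
        obtain ⟨hPm, hQm⟩ := rat_eq_unique hq0 hQm0 hcop (cfPair_coprime b₀ (pref b m))
          (hmR.symm.trans (cast_cfq_eq b₀ (pref b m) hprefpos))
        have hblim' : Tendsto (cx b₀ b) atTop (nhds α) := hblim
        have hint := fun i => cx_lt_lim b₀ b hbpos hblim' i
        have hxm : cx b₀ b m = (p : ℝ) / (q : ℝ) := hmR
        have hmodd : Odd m := by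
          rcases Nat.even_or_odd m with he | ho
          · exfalso
            obtain ⟨u, hu⟩ := he
            have h2 := (hint u).1
            rw [show 2 * u = m by omega, hxm] at h2
            linarith
          · exact ho
        obtain ⟨u, hu⟩ := hmodd
        have hlow : α < cx b₀ b m := by
          have := (hint u).2; rwa [show 2 * u + 1 = m by omega] at this
        have hhigh : cx b₀ b (m + 1) < α := by
          have := (hint (u + 1)).1; rwa [show 2 * (u + 1) = m + 1 by omega] at this
        have hq'm := cfPair_q_nonneg b₀ (pref b m) hprefpos
        have hdetm : p * (cfPair b₀ (pref b m)).2.2 - (cfPair b₀ (pref b m)).1.2 * q = 1 := by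
          have hd := cfPair_det b₀ (pref b m)
          rw [length_pref] at hd
          have hoddm1 : Even (m + 1) := by
            rcases Nat.even_or_odd (m + 1) with he | ho
            · exact he
            · exfalso; obtain ⟨v, hv⟩ := ho; omega
          rw [hoddm1.neg_one_pow] at hd
          rw [← hPm, ← hQm] at hd
          exact hd
        have hdvd : q ∣ (q' - (cfPair b₀ (pref b m)).2.2) := by
          apply (hcop.symm).dvd_of_dvd_mul_left
          exact ⟨p' - (cfPair b₀ (pref b m)).1.2, by linarith [hdetn, hdetm]⟩
        obtain ⟨k, hk⟩ := hdvd
        have hbm1 : 0 ≤ (cfPair b₀ (pref b m)).2.2 := hq'm.1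
        have hbm2 : (cfPair b₀ (pref b m)).2.2 ≤ q := by rw [hQm]; exact hq'm.2.1
        have hkcases : k = 0 ∨ k = 1 ∨ k = -1 := by
          have h1 : -1 ≤ k := by nlinarith
          have h2 : k ≤ 1 := by nlinarith
          omega
        have hq'eq : q' = (cfPair b₀ (pref b m)).2.2 := by
          rcases hkcases with h | h | h
          · subst h; omega
          · exfalso
            subst h
            have e1 : (cfPair b₀ (pref b m)).2.2 = 0 := by omega
            have hm0 : pref b m ≠ [] := by
              intro hnil
              have hlen := length_pref b m
              rw [hnil] at hlen
              simp at hlen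
              omega
            have := cfPair_q'_pos b₀ (pref b m) hm0 hprefpos
            omega
          · exfalso
            subst h
            have e1 : q' = 0 := by omega
            have hl0 : l ≠ [] := by
              intro hnil
              rw [hnil] at hodd
              simp at hodd
            have hge := cfPair_q'_pos a₀ l hl0 hl
            rw [← hq'd] at hge
            omega
        have hom : Odd m := ⟨u, hu⟩
        have hdiff := cx_diff b₀ b hbpos m
        rw [hom.neg_one_pow] at hdiff
        have hcQm : cQ b₀ b m = q := by unfold cQ; omega
        have hrec : cQ b₀ b (m + 1) = (b m : ℤ) * q + q' := by
          unfold cQ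
          rw [cfPair_pref_succ]
          dsimp only
          rw [← hQm, ← hq'eq]
        have hbm : (1 : ℤ) ≤ (b m : ℤ) := by exact_mod_cast hbpos m
        have hQm1_ge : q + q' ≤ cQ b₀ b (m + 1) := by rw [hrec]; nlinarith
        have hprod : (q : ℝ) * ((q : ℝ) + (q' : ℝ)) ≤
            ((cQ b₀ b m : ℤ) : ℝ) * ((cQ b₀ b (m + 1) : ℤ) : ℝ) := by
          rw [hcQm]
          have : ((q : ℤ) : ℝ) + (q' : ℝ) ≤ ((cQ b₀ b (m + 1) : ℤ) : ℝ) := by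
            exact_mod_cast hQm1_ge
          nlinarith
        have h1 : (p : ℝ) / (q : ℝ) - α <
            1 / (((cQ b₀ b m : ℤ) : ℝ) * ((cQ b₀ b (m + 1) : ℤ) : ℝ)) := by
          rw [← hxm]
          have : cx b₀ b m - cx b₀ b (m + 1)
              = 1 / (((cQ b₀ b m : ℤ) : ℝ) * ((cQ b₀ b (m + 1) : ℤ) : ℝ)) := by
            rw [← neg_sub, hdiff]; ring
          linarith
        have h2 : 1 / (((cQ b₀ b m : ℤ) : ℝ) * ((cQ b₀ b (m + 1) : ℤ) : ℝ))
            ≤ 1 / ((q : ℝ) * ((q : ℝ) + (q' : ℝ))) :=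
          one_div_le_one_div_of_le hdenR hprod
        rw [abs_of_neg (by linarith : α - (p : ℝ) / (q : ℝ) < 0)]
        linarith
    · -- backward
      intro hineq
      have hDneg : (q : ℝ) * α - (p : ℝ) < 0 := by
        have := (lt_div_iff₀ hqR).mp hcase
        linarith
      have habs := (abs_lt.mp hineq).1
      have hexp : ((p : ℝ) / (q : ℝ) - α) * ((q : ℝ) * ((q : ℝ) + (q' : ℝ)))
          = (p : ℝ) * ((q : ℝ) + (q' : ℝ)) - α * (q : ℝ) * ((q : ℝ) + (q' : ℝ)) := by
        field_simp
      have h6 : (p : ℝ) * ((q : ℝ) + (q' : ℝ)) - α * (q : ℝ) * ((q : ℝ) + (q' : ℝ)) < 1 := by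
        rw [← hexp]
        have h7 : (p : ℝ) / (q : ℝ) - α < 1 / ((q : ℝ) * ((q : ℝ) + (q' : ℝ))) := by
          linarith
        calc ((p : ℝ) / (q : ℝ) - α) * ((q : ℝ) * ((q : ℝ) + (q' : ℝ)))
            < (1 / ((q : ℝ) * ((q : ℝ) + (q' : ℝ)))) * ((q : ℝ) * ((q : ℝ) + (q' : ℝ))) := by
              exact mul_lt_mul_of_pos_right h7 hdenR
          _ = 1 := by field_simp
      have key : (p : ℝ) + (p' : ℝ) < α * ((q : ℝ) + (q' : ℝ)) := by
        have h8 : ((p : ℝ) + (p' : ℝ)) * (q : ℝ) < (α * ((q : ℝ) + (q' : ℝ))) * (q : ℝ) := by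
          nlinarith [h6, hdetR]
        exact lt_of_mul_lt_mul_right h8 (le_of_lt hqR)
      set β : ℝ := ((p' : ℝ) - (q' : ℝ) * α) / ((q : ℝ) * α - (p : ℝ)) with hβd
      have hβ1 : 1 < β := by
        rw [hβd, lt_div_iff_of_neg hDneg]
        nlinarith [key]
      have hβirr : Irrational β :=
        beta_irrational α hirr p p' q q' (by rw [hdetR]; norm_num) (ne_of_lt hDneg)
      have hdenβ : (0 : ℝ) < (q : ℝ) * β + (q' : ℝ) := by nlinarith
      have hα_eq := alpha_eq_frac α (p : ℝ) (p' : ℝ) (q : ℝ) (q' : ℝ)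
        (ne_of_lt hDneg) (ne_of_gt hdenβ)
      obtain ⟨A, hApos, htend, hprefl⟩ := exists_expansion α a₀ l hl hβirr hβ1
        (by rw [← hp, ← hp'd, ← hq2, ← hq'd]; exact hα_eq)
      exact Or.inr ⟨a₀, A, hApos, htend, l.length, by rw [hprefl]; exact hval⟩
  · -- p/q < α
    have heven : Even l.length := hpar₁ hcase
    have hdetn : p * q' - p' * q = -1 := by
      rw [hdetz, (heven.add_one).neg_one_pow]
    have hdetR : (p : ℝ) * (q' : ℝ) - (p' : ℝ) * (q : ℝ) = -1 := by exact_mod_cast hdetn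
    constructor
    · -- forward
      intro hconv
      rcases hconv with ⟨b₀, m0, _, hvalm, _⟩ | ⟨b₀, b, hbpos, hblim, m, hm⟩
      · exact absurd ⟨_, hvalm⟩ hirr
      · have hprefpos := pref_pos b hbpos m
        have hmR : ((cfq b₀ (pref b m) : ℚ) : ℝ) = (p : ℝ) / (q : ℝ) := by
          rw [hm]; push_cast; ring
        have hQm0 : (0 : ℤ) < (cfPair b₀ (pref b m)).2.1 := by
          have := (cfPair_q_nonneg b₀ (pref b m) hprefpos).2.2; omega
        obtain ⟨hPm, hQm⟩ := rat_eq_unique hq0 hQm0 hcop (cfPair_coprime b₀ (pref b m))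
          (hmR.symm.trans (cast_cfq_eq b₀ (pref b m) hprefpos))
        have hblim' : Tendsto (cx b₀ b) atTop (nhds α) := hblim
        have hint := fun i => cx_lt_lim b₀ b hbpos hblim' i
        have hxm : cx b₀ b m = (p : ℝ) / (q : ℝ) := hmR
        have hmeven : Even m := by
          rcases Nat.even_or_odd m with he | ho
          · exact he
          · exfalso
            obtain ⟨u, hu⟩ := ho
            have h2 := (hint u).2
            rw [show 2 * u + 1 = m by omega, hxm] at h2
            linarith
        obtain ⟨u, hu⟩ := hmeven
        have hlow : cx b₀ b m < α := by
          have := (hint u).1; rwa [show 2 * u = m by omega] at this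
        have hhigh : α < cx b₀ b (m + 1) := by
          have := (hint u).2; rwa [show 2 * u + 1 = m + 1 by omega] at this
        have hq'm := cfPair_q_nonneg b₀ (pref b m) hprefpos
        have hdetm : p * (cfPair b₀ (pref b m)).2.2 - (cfPair b₀ (pref b m)).1.2 * q = -1 := by
          have hd := cfPair_det b₀ (pref b m)
          rw [length_pref] at hd
          have hoddm1 : Odd (m + 1) := by
            rcases Nat.even_or_odd (m + 1) with he | ho
            · exfalso; obtain ⟨v, hv⟩ := he; omega
            · exact ho
          rw [hoddm1.neg_one_pow] at hd
          rw [← hPm, ← hQm] at hd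
          exact hd
        have hdvd : q ∣ (q' - (cfPair b₀ (pref b m)).2.2) := by
          apply (hcop.symm).dvd_of_dvd_mul_left
          exact ⟨p' - (cfPair b₀ (pref b m)).1.2, by linarith [hdetn, hdetm]⟩
        obtain ⟨k, hk⟩ := hdvd
        have hbm1 : 0 ≤ (cfPair b₀ (pref b m)).2.2 := hq'm.1
        have hbm2 : (cfPair b₀ (pref b m)).2.2 ≤ q := by rw [hQm]; exact hq'm.2.1
        have hkcases : k = 0 ∨ k = 1 ∨ k = -1 := by
          have h1 : -1 ≤ k := by nlinarith
          have h2 : k ≤ 1 := by nlinarith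
          omega
        have hq'eq : q' = (cfPair b₀ (pref b m)).2.2 := by
          rcases hkcases with h | h | h
          · subst h; omega
          · exfalso
            subst h
            have e1 : q' = q := by omega
            have e2 : q' = (cfPair a₀ l).2.1 := by rw [e1, hq2]
            have := cfPair_q'_eq_q a₀ l hl (by rw [← hq'd, e2])
            rw [this] at heven
            simp [Nat.even_iff] at heven
          · exfalso
            subst h
            have e1 : (cfPair b₀ (pref b m)).2.2 = q := by omega
            have := cfPair_q'_eq_q b₀ (pref b m) hprefpos (by rw [e1, hQm])
            rw [length_pref] at this
            omega
        have hem : Even m := ⟨u, hu⟩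
        have hdiff := cx_diff b₀ b hbpos m
        rw [hem.neg_one_pow] at hdiff
        have hcQm : cQ b₀ b m = q := by unfold cQ; omega
        have hrec : cQ b₀ b (m + 1) = (b m : ℤ) * q + q' := by
          unfold cQ
          rw [cfPair_pref_succ]
          dsimp only
          rw [← hQm, ← hq'eq]
        have hbm : (1 : ℤ) ≤ (b m : ℤ) := by exact_mod_cast hbpos m
        have hQm1_ge : q + q' ≤ cQ b₀ b (m + 1) := by rw [hrec]; nlinarith
        have hprod : (q : ℝ) * ((q : ℝ) + (q' : ℝ)) ≤
            ((cQ b₀ b m : ℤ) : ℝ) * ((cQ b₀ b (m + 1) : ℤ) : ℝ) := by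
          rw [hcQm]
          have : ((q : ℤ) : ℝ) + (q' : ℝ) ≤ ((cQ b₀ b (m + 1) : ℤ) : ℝ) := by
            exact_mod_cast hQm1_ge
          nlinarith
        have h1 : α - (p : ℝ) / (q : ℝ) <
            1 / (((cQ b₀ b m : ℤ) : ℝ) * ((cQ b₀ b (m + 1) : ℤ) : ℝ)) := by
          rw [← hxm]
          have : cx b₀ b (m + 1) - cx b₀ b m
              = 1 / (((cQ b₀ b m : ℤ) : ℝ) * ((cQ b₀ b (m + 1) : ℤ) : ℝ)) := by
            rw [hdiff]
          linarith
        have h2 : 1 / (((cQ b₀ b m : ℤ) : ℝ) * ((cQ b₀ b (m + 1) : ℤ) : ℝ))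
            ≤ 1 / ((q : ℝ) * ((q : ℝ) + (q' : ℝ))) :=
          one_div_le_one_div_of_le hdenR hprod
        rw [abs_of_pos (by linarith : (0 : ℝ) < α - (p : ℝ) / (q : ℝ))]
        linarith
    · -- backward
      intro hineq
      have hDpos : (0 : ℝ) < (q : ℝ) * α - (p : ℝ) := by
        have := (div_lt_iff₀ hqR).mp hcase
        linarith
      have habs := (abs_lt.mp hineq).2
      have hexp : (α - (p : ℝ) / (q : ℝ)) * ((q : ℝ) * ((q : ℝ) + (q' : ℝ)))
          = α * (q : ℝ) * ((q : ℝ) + (q' : ℝ)) - (p : ℝ) * ((q : ℝ) + (q' : ℝ)) := by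
        field_simp
      have h6 : α * (q : ℝ) * ((q : ℝ) + (q' : ℝ)) - (p : ℝ) * ((q : ℝ) + (q' : ℝ)) < 1 := by
        rw [← hexp]
        calc (α - (p : ℝ) / (q : ℝ)) * ((q : ℝ) * ((q : ℝ) + (q' : ℝ)))
            < (1 / ((q : ℝ) * ((q : ℝ) + (q' : ℝ)))) * ((q : ℝ) * ((q : ℝ) + (q' : ℝ))) := by
              exact mul_lt_mul_of_pos_right habs hdenR
          _ = 1 := by field_simp
      have key : α * ((q : ℝ) + (q' : ℝ)) < (p : ℝ) + (p' : ℝ) := by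
        have h8 : (α * ((q : ℝ) + (q' : ℝ))) * (q : ℝ) < ((p : ℝ) + (p' : ℝ)) * (q : ℝ) := by
          nlinarith [h6, hdetR]
        exact lt_of_mul_lt_mul_right h8 (le_of_lt hqR)
      set β : ℝ := ((p' : ℝ) - (q' : ℝ) * α) / ((q : ℝ) * α - (p : ℝ)) with hβd
      have hβ1 : 1 < β := by
        rw [hβd, lt_div_iff₀ hDpos]
        nlinarith [key]
      have hβirr : Irrational β :=
        beta_irrational α hirr p p' q q' (by rw [hdetR]; norm_num) (ne_of_gt hDpos)
      have hdenβ : (0 : ℝ) < (q : ℝ) * β + (q' : ℝ) := by nlinarith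
      have hα_eq := alpha_eq_frac α (p : ℝ) (p' : ℝ) (q : ℝ) (q' : ℝ)
        (ne_of_gt hDpos) (ne_of_gt hdenβ)
      obtain ⟨A, hApos, htend, hprefl⟩ := exists_expansion α a₀ l hl hβirr hβ1
        (by rw [← hp, ← hp'd, ← hq2, ← hq'd]; exact hα_eq)
      exact Or.inr ⟨a₀, A, hApos, htend, l.length, by rw [hprefl]; exact hval⟩
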